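/- arXiv:1301.0719 — 6 statements merged into one kernel-verified Lean document; each statement's English description precedes it below -/
import Mathlib

section
/- Let n ≥ 2, x₀ > 0 and G*(x) = min((x/(n·x₀))^{1/(n-1)}, 1). Then for every probability measure μ on [0,∞) with mean x₀, ∫₀^∞ G*(x)^{n-1} dμ(x) ≤ 1/n, and equality holds when μ is the measure with distribution function G*. -/
/-! On `[0,∞)` we have `G*(x)^(n-1) = min (x / (n x₀)) 1 ≤ x / (n x₀)`, so integrating
against a measure of mean `x₀` gives at most `1/n`. Against the density of `G*`, which lives on
`[0, n x₀]` where the minimum is `x / (n x₀)`, the integrand collapses to a multiple of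
`(x / (n x₀)) ^ (1/(n-1))`, whose integral is elementary. -/

open MeasureTheory Set

lemma min_rpow_inv_one_pow {m : ℕ} (hm : m ≠ 0) {t : ℝ} (ht : 0 ≤ t) :
    (min (t ^ (m : ℝ)⁻¹) 1) ^ m = min t 1 := by
  rcases le_total (t ^ (m : ℝ)⁻¹) 1 with h | h
  · rw [min_eq_left h, Real.rpow_inv_natCast_pow ht hm, min_eq_left]
    simpa [Real.rpow_inv_natCast_pow ht hm] using pow_le_one₀ (by positivity) h (n := m)
  · rw [min_eq_right h, one_pow, min_eq_right]
    simpa [Real.rpow_inv_natCast_pow ht hm] using one_le_pow₀ h (n := m)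

lemma integral_le_const_mul_integral_id {μ : Measure ℝ} (hμ : μ (Iio 0) = 0)
    (hint : Integrable (fun x => x) μ) {f : ℝ → ℝ} {c : ℝ}
    (hf₀ : ∀ x, 0 ≤ x → 0 ≤ f x) (hf : ∀ x, 0 ≤ x → f x ≤ c * x) :
    ∫ x, f x ∂μ ≤ c * ∫ x, x ∂μ := by
  have hae : ∀ᵐ x ∂μ, 0 ≤ x :=
    ae_iff.2 <| measure_mono_null (fun _ hx => not_le.1 hx) hμ
  rw [← integral_const_mul]
  exact integral_mono_of_nonneg (hae.mono hf₀) (hint.const_mul c) (hae.mono hf)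

lemma integral_div_rpow {M r : ℝ} (hM : 0 < M) (hr : -1 < r) :
    ∫ x in (0 : ℝ)..M, (x / M) ^ r = M / (r + 1) := by
  rw [intervalIntegral.integral_comp_div (· ^ r) hM.ne', zero_div, div_self hM.ne',
    integral_rpow (Or.inl hr), Real.one_rpow, Real.zero_rpow (by linarith), smul_eq_mul]
  ring

/-- for `G*(x) = min((x/(n x₀))^{1/(n-1)}, 1)`, every probability measure on
`[0,∞)` with mean `x₀` satisfies `∫ G*(x)^{n-1} dμ ≤ 1/n`, with equality for the measure
with distribution function `G*` (which has the indicated density on `(0, n x₀)`). -/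
theorem stmt_2 (n : ℕ) (hn : 2 ≤ n) (x₀ : ℝ) (hx₀ : 0 < x₀)
    (Gstar : ℝ → ℝ)
    (hG : ∀ x, Gstar x = min ((x / (n * x₀)) ^ (((n:ℝ) - 1)⁻¹)) 1) :
    (∀ μ : Measure ℝ, IsProbabilityMeasure μ → μ (Set.Iio 0) = 0 →
        Integrable (fun x => x) μ → ∫ x, x ∂μ = x₀ →
        ∫ x, Gstar x ^ (n - 1) ∂μ ≤ 1 / n) ∧
      ∫ x in (0:ℝ)..(n * x₀),
          Gstar x ^ (n - 1) *
            (1 / (((n:ℝ) - 1) * n * x₀) * (x / (n * x₀)) ^ ((2 - (n:ℝ)) / ((n:ℝ) - 1)))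
        = 1 / n := by
  have hn₁ : ((n - 1 : ℕ) : ℝ) = n - 1 := by rw [Nat.cast_sub (by omega), Nat.cast_one]
  have hm : (0 : ℝ) < n - 1 := by rw [← hn₁]; exact_mod_cast (by omega : 0 < n - 1)
  have hM : (0 : ℝ) < n * x₀ := by positivity
  have hGpow : ∀ x, 0 ≤ x → Gstar x ^ (n - 1) = min (x / (n * x₀)) 1 := fun x hx => by
    rw [hG, ← hn₁, min_rpow_inv_one_pow (by omega) (by positivity)]
  refine ⟨fun μ _ hμ hint hmean => ?_, ?_⟩
  · calc ∫ x, Gstar x ^ (n - 1) ∂μ ≤ (n * x₀)⁻¹ * ∫ x, x ∂μ := by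
          refine integral_le_const_mul_integral_id hμ hint (fun x hx => ?_) (fun x hx => ?_)
          · rw [hGpow x hx]; positivity
          · rw [hGpow x hx, ← div_eq_inv_mul]; exact min_le_left _ _
      _ = 1 / n := by rw [hmean]; field_simp
  · have hdensity : EqOn
        (fun x => Gstar x ^ (n - 1) *
            (1 / (((n:ℝ) - 1) * n * x₀) * (x / (n * x₀)) ^ ((2 - (n:ℝ)) / ((n:ℝ) - 1))))
        (fun x => 1 / (((n:ℝ) - 1) * n * x₀) * (x / (n * x₀)) ^ ((n:ℝ) - 1)⁻¹)
        (uIcc 0 (n * x₀)) := by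
      intro x hx
      rw [uIcc_of_le hM.le] at hx
      have ht : 0 ≤ x / (n * x₀) := div_nonneg hx.1 hM.le
      have hexp : 1 + (2 - (n:ℝ)) / ((n:ℝ) - 1) = ((n:ℝ) - 1)⁻¹ := by field_simp; ring
      simp only
      rw [hGpow x hx.1, min_eq_left ((div_le_one hM).2 hx.2), ← hexp,
        Real.rpow_one_add' ht (by rw [hexp]; positivity)]
      ring
    rw [intervalIntegral.integral_congr hdensity, intervalIntegral.integral_const_mul,
      integral_div_rpow hM (by linarith [inv_pos.2 hm])]
    field_simp
    ring
end

section
/- Let n ≥ 2, K ≥ 0, x₀ > 0 and set N = n + K·(n-1). Let G*(x) = min((x/(N·x₀))^{1/(N-1)}, 1) for x ≥ 0. Then for all x ≥ 0, (1+K)·G*(x)^{n-1} - K·x·∫_x^∞ G*(y)^{n-1}/y² dy - x/(N·x₀) ≤ 0, with equality for 0 ≤ x ≤ N·x₀. -/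
/-!
Write `a = N x₀` and `α = 1/(K+1)`, so that `G*^{n-1}` is `(y/a)^α` on `[0, a]` and `1` beyond.
Splitting the integral at `a` gives, for `0 < x ≤ a` and `K > 0`,
`x ∫_x^∞ G*^{n-1}/y² = (x/a - (x/a)^α)/(α - 1) + x/a`, and since `K/(α - 1) = -(K+1)` the
expression collapses to `0`. For `x > a` the expression is `1 - x/a < 0`.
-/

open MeasureTheory Set

noncomputable def capPow (a α y : ℝ) : ℝ := min ((y / a) ^ α) 1

section capPow

variable {a α : ℝ}

lemma capPow_of_le (ha : 0 < a) (hα : 0 ≤ α) {y : ℝ} (hy : 0 ≤ y) (hya : y ≤ a) :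
    capPow a α y = (y / a) ^ α :=
  min_eq_left (Real.rpow_le_one (div_nonneg hy ha.le) ((div_le_one ha).2 hya) hα)

lemma capPow_of_ge (ha : 0 < a) (hα : 0 ≤ α) {y : ℝ} (hay : a ≤ y) : capPow a α y = 1 :=
  min_eq_right (Real.one_le_rpow ((one_le_div ha).2 hay) hα)

lemma capPow_zero (hα : α ≠ 0) : capPow a α 0 = 0 := by
  simp [capPow, Real.zero_rpow hα]

lemma capPow_div_sq_eq_rpow_of_ge (ha : 0 < a) (hα : 0 ≤ α) {y : ℝ} (hay : a ≤ y) :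
    capPow a α y / y ^ 2 = y ^ (-2 : ℝ) := by
  rw [capPow_of_ge ha hα hay, Real.rpow_neg (ha.le.trans hay), one_div]
  norm_cast

lemma continuousOn_capPow_div_sq (ha : 0 < a) :
    ContinuousOn (fun y ↦ capPow a α y / y ^ 2) (Ioi 0) := by
  intro y hy
  have hy0 : y ≠ 0 := (mem_Ioi.1 hy).ne'
  unfold capPow
  have hpow : ContinuousAt (fun y ↦ (y / a) ^ α) y :=
    (continuousAt_id.div_const a).rpow_const (.inl (div_ne_zero hy0 ha.ne'))
  exact ContinuousAt.continuousWithinAt <|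
    (hpow.min continuousAt_const).div (continuousAt_id.pow 2) (pow_ne_zero 2 hy0)

lemma integrableOn_Ioi_capPow_div_sq (ha : 0 < a) (hα : 0 ≤ α) {c : ℝ} (hac : a ≤ c) :
    IntegrableOn (fun y ↦ capPow a α y / y ^ 2) (Ioi c) :=
  (integrableOn_Ioi_rpow_of_lt (by norm_num) (ha.trans_le hac)).congr_fun
    (fun y hy ↦ (capPow_div_sq_eq_rpow_of_ge ha hα (hac.trans (le_of_lt hy))).symm)
    measurableSet_Ioi

lemma integral_Ioi_capPow_div_sq_of_ge (ha : 0 < a) (hα : 0 ≤ α) {c : ℝ} (hac : a ≤ c) :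
    ∫ y in Ioi c, capPow a α y / y ^ 2 = c⁻¹ := by
  rw [setIntegral_congr_fun measurableSet_Ioi
      (fun y hy ↦ capPow_div_sq_eq_rpow_of_ge ha hα (hac.trans (le_of_lt hy))),
    integral_Ioi_rpow_of_lt (by norm_num) (ha.trans_le hac)]
  norm_num [Real.rpow_neg_one]

lemma div_rpow_div_sq_eq {y : ℝ} (ha : 0 < a) (hy : 0 < y) :
    (y / a) ^ α / y ^ 2 = a ^ (-α) * y ^ (α - 2) := by
  rw [Real.div_rpow hy.le ha.le, Real.rpow_neg ha.le, Real.rpow_sub hy]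
  norm_cast
  ring

lemma integral_Ioc_div_rpow_div_sq {x : ℝ} (hx : 0 < x) (hxa : x ≤ a) (hα : α ≠ 1) :
    ∫ y in Ioc x a, (y / a) ^ α / y ^ 2 = (a⁻¹ - (x / a) ^ α / x) / (α - 1) := by
  have ha : 0 < a := hx.trans_le hxa
  have h0 : (0 : ℝ) ∉ uIcc x a := by
    rw [uIcc_of_le hxa]; exact fun h ↦ hx.not_ge h.1
  rw [setIntegral_congr_fun measurableSet_Ioc (fun y hy ↦ div_rpow_div_sq_eq ha (hx.trans hy.1)),
    ← intervalIntegral.integral_of_le hxa, intervalIntegral.integral_const_mul,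
    integral_rpow (Or.inr ⟨fun h ↦ hα (by linarith), h0⟩), show α - 2 + 1 = α - 1 by ring]
  have hxa' : a ^ (-α) * x ^ (α - 1) = (x / a) ^ α / x := by
    rw [Real.div_rpow hx.le ha.le, Real.rpow_neg ha.le, Real.rpow_sub_one hx.ne']
    ring
  have haa : a ^ (-α) * a ^ (α - 1) = a⁻¹ := by
    rw [← Real.rpow_add ha, show -α + (α - 1) = -1 by ring, Real.rpow_neg_one]
  rw [mul_div_assoc', mul_sub, haa, hxa']

lemma integral_Ioi_capPow_div_sq_of_le (hα : 0 ≤ α) (hα1 : α ≠ 1) {x : ℝ} (hx : 0 < x)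
    (hxa : x ≤ a) :
    ∫ y in Ioi x, capPow a α y / y ^ 2 = (a⁻¹ - (x / a) ^ α / x) / (α - 1) + a⁻¹ := by
  have ha : 0 < a := hx.trans_le hxa
  have hIoc : ∫ y in Ioc x a, capPow a α y / y ^ 2 = (a⁻¹ - (x / a) ^ α / x) / (α - 1) := by
    rw [← integral_Ioc_div_rpow_div_sq hx hxa hα1]
    exact setIntegral_congr_fun measurableSet_Ioc
      (fun y hy ↦ by rw [capPow_of_le ha hα (hx.trans hy.1).le hy.2])
  have hint : IntegrableOn (fun y ↦ capPow a α y / y ^ 2) (Ioc x a) :=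
    ((continuousOn_capPow_div_sq ha).mono fun y hy ↦ hx.trans_le hy.1).integrableOn_Icc
      |>.mono_set Ioc_subset_Icc_self
  rw [← Ioc_union_Ioi_eq_Ioi hxa, setIntegral_union Ioc_disjoint_Ioi_same measurableSet_Ioi
    hint (integrableOn_Ioi_capPow_div_sq ha hα le_rfl), hIoc,
    integral_Ioi_capPow_div_sq_of_ge ha hα le_rfl]

end capPow

section balance

variable {a K x : ℝ}

theorem capPow_balance_of_le (ha : 0 < a) (hK : 0 ≤ K) (hx : 0 ≤ x) (hxa : x ≤ a) :
    (1 + K) * capPow a (K + 1)⁻¹ x - K * x * (∫ y in Ioi x, capPow a (K + 1)⁻¹ y / y ^ 2)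
      - x / a = 0 := by
  have hα : 0 ≤ (K + 1)⁻¹ := by positivity
  obtain rfl | hx := hx.eq_or_lt
  · simp [capPow_zero (inv_ne_zero (by linarith : K + 1 ≠ 0))]
  obtain rfl | hK := hK.eq_or_lt
  · simp [capPow_of_le ha zero_le_one hx.le hxa]
  have hα1 : (K + 1)⁻¹ ≠ 1 := by
    rw [Ne, inv_eq_one]; linarith
  rw [integral_Ioi_capPow_div_sq_of_le hα hα1 hx hxa, capPow_of_le ha hα hx.le hxa]
  generalize (x / a) ^ (K + 1)⁻¹ = p
  field_simp [hK.ne']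
  ring

theorem capPow_balance_of_gt (ha : 0 < a) (hK : 0 ≤ K) (hax : a < x) :
    (1 + K) * capPow a (K + 1)⁻¹ x - K * x * (∫ y in Ioi x, capPow a (K + 1)⁻¹ y / y ^ 2)
      - x / a < 0 := by
  have hα : 0 ≤ (K + 1)⁻¹ := by positivity
  have hx : 0 < x := ha.trans hax
  have hlt : 1 < x / a := (one_lt_div ha).2 hax
  rw [capPow_of_ge ha hα hax.le, integral_Ioi_capPow_div_sq_of_ge ha hα hax.le,
    mul_assoc, mul_inv_cancel₀ hx.ne']
  linarith

end balance

/-- with `N = n + K(n-1)` and `G*(x) = min((x/(N x₀))^{1/(N-1)}, 1)`, for all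
`x ≥ 0` we have `(1+K) G*(x)^{n-1} - K x ∫_x^∞ G*(y)^{n-1}/y² dy - x/(N x₀) ≤ 0`,
with equality for `0 ≤ x ≤ N x₀`.  Here `G*(y)^{n-1} = min((y/(N x₀))^{1/(K+1)}, 1)`. -/
theorem stmt_3 (n : ℕ) (hn : 2 ≤ n) (K : ℝ) (hK : 0 ≤ K) (x₀ : ℝ) (hx₀ : 0 < x₀)
    (N : ℝ) (hN : N = n + K * (n - 1))
    (Gpow : ℝ → ℝ)
    (hGpow : ∀ x, 0 ≤ x → Gpow x = min ((x / (N * x₀)) ^ ((K + 1)⁻¹)) 1) :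
    ∀ x, 0 ≤ x →
      ((1 + K) * Gpow x - K * x * (∫ y in Set.Ioi x, Gpow y / y ^ 2) - x / (N * x₀) ≤ 0 ∧
        (x ≤ N * x₀ →
          (1 + K) * Gpow x - K * x * (∫ y in Set.Ioi x, Gpow y / y ^ 2) - x / (N * x₀) = 0)) := by
  intro x hx
  have ha : 0 < N * x₀ := by
    have hn' : (2 : ℝ) ≤ n := by exact_mod_cast hn
    exact mul_pos (by rw [hN]; nlinarith) hx₀
  have hG : ∀ y, 0 ≤ y → Gpow y = capPow (N * x₀) (K + 1)⁻¹ y := hGpow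
  have hint : ∫ y in Ioi x, Gpow y / y ^ 2 = ∫ y in Ioi x, capPow (N * x₀) (K + 1)⁻¹ y / y ^ 2 :=
    setIntegral_congr_fun measurableSet_Ioi fun y hy ↦ by rw [hG y (hx.trans (le_of_lt hy))]
  rw [hG x hx, hint]
  refine ⟨?_, capPow_balance_of_le ha hK hx⟩
  rcases le_or_gt x (N * x₀) with hxa | hax
  · exact (capPow_balance_of_le ha hK hx hxa).le
  · exact (capPow_balance_of_gt ha hK hax).le
end

section
/- Let n ≥ 2, K ≥ 0, x₀ > 0, N = n + K(n-1), and C₁ = (N·x₀)^{-1/(K+1)}. Define G*(x) = (C₁·x^{1/(K+1)})^{1/(n-1)} on [0, N·x₀]. Then G*(N·x₀) = 1 and ∫₀^{N·x₀} x dG*(x) = x₀. -/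
open Set

/-!
`G*` is the distribution function `(x / M)^b` of a power law on `[0, M]` with `M = N x₀` and
`b = 1 / ((K + 1)(n - 1))`; its density is `b M^{-b} x^{b-1}`, so its mean is `b M / (b + 1)`.
Since `N = 1 + (K + 1)(n - 1) = 1 + 1/b`, this mean is `M / N = x₀`.
-/

theorem integral_mul_rpow_sub_one {b M : ℝ} (hb : 0 < b) (hM : 0 ≤ M) :
    ∫ x in (0:ℝ)..M, x * x ^ (b - 1) = M ^ (b + 1) / (b + 1) := by
  have h_eq : EqOn (fun x : ℝ => x * x ^ (b - 1)) (fun x => x ^ b) (uIcc 0 M) := by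
    intro x hx
    rw [uIcc_of_le hM] at hx
    have := Real.rpow_add' hx.1 (y := 1) (z := b - 1) (by simpa using hb.ne')
    simp only [add_sub_cancel, Real.rpow_one] at this
    exact this.symm
  rw [intervalIntegral.integral_congr h_eq, integral_rpow (Or.inl (by linarith)),
    Real.zero_rpow (by positivity), sub_zero]

theorem integral_mul_powerLaw_density {b M : ℝ} (hb : 0 < b) (hM : 0 < M) :
    ∫ x in (0:ℝ)..M, x * (b * M ^ (-b) * x ^ (b - 1)) = b / (b + 1) * M := by
  simp_rw [mul_left_comm _ (b * M ^ (-b))]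
  rw [intervalIntegral.integral_const_mul, integral_mul_rpow_sub_one hb hM.le, mul_div_assoc',
    mul_assoc, ← Real.rpow_add hM, neg_add_cancel_left, Real.rpow_one, mul_div_right_comm]

/-- with `N = n + K(n-1)`, `C₁ = (N x₀)^{-1/(K+1)}` and
`G*(x) = (C₁ x^{1/(K+1)})^{1/(n-1)}` on `[0, N x₀]`, we have `G*(N x₀) = 1` and the mean
`∫₀^{N x₀} x dG*(x) = ∫₀^{N x₀} x G*'(x) dx = x₀`. -/
theorem stmt_4 (n : ℕ) (hn : 2 ≤ n) (K : ℝ) (hK : 0 ≤ K) (x₀ : ℝ) (hx₀ : 0 < x₀)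
    (N : ℝ) (hN : N = n + K * (n - 1))
    (C₁ : ℝ) (hC₁ : C₁ = (N * x₀) ^ (-(K + 1)⁻¹))
    (Gstar : ℝ → ℝ)
    (hG : ∀ x ∈ Set.Icc (0:ℝ) (N * x₀), Gstar x = (C₁ * x ^ ((K + 1)⁻¹)) ^ (((n:ℝ) - 1)⁻¹)) :
    Gstar (N * x₀) = 1 ∧
      ∫ x in (0:ℝ)..(N * x₀),
          x * (1 / ((K + 1) * ((n:ℝ) - 1)) * C₁ ^ (((n:ℝ) - 1)⁻¹) *
            x ^ (((K + 1) * ((n:ℝ) - 1))⁻¹ - 1))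
        = x₀ := by
  have hn1 : (1:ℝ) ≤ n - 1 := by
    have : (2:ℝ) ≤ n := by exact_mod_cast hn
    linarith
  set a := (K + 1) * ((n:ℝ) - 1) with ha_def
  have ha : 0 < a := mul_pos (by linarith) (by linarith)
  have hN_eq : N * x₀ = (a + 1) * x₀ := by rw [hN, ha_def]; ring
  have hM : 0 < N * x₀ := by rw [hN_eq]; positivity
  have hC : C₁ ^ ((n:ℝ) - 1)⁻¹ = (N * x₀) ^ (-a⁻¹) := by
    rw [hC₁, ← Real.rpow_mul hM.le, ha_def, mul_inv, neg_mul]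
  refine ⟨?_, ?_⟩
  · rw [hG _ ⟨hM.le, le_rfl⟩, hC₁, ← Real.rpow_add hM, neg_add_cancel, Real.rpow_zero,
      Real.one_rpow]
  · rw [one_div, hC, integral_mul_powerLaw_density (inv_pos.2 ha) hM, hN_eq]
    field_simp
    ring
end

section
/- Let K > 0, n ≥ 2, and suppose φ, ψ, θ are differentiable functions on [x₀, r] satisfying φ'(y)·ψ'(y) = (1+K)·θ'(y) and K·ψ'(y) = (y - φ(y))·ψ''(y) for all y ∈ (x₀, r), with boundary conditions φ(x₀) = x₀ and θ(x₀) = ψ(x₀), and with ψ'' > 0 on (x₀,r). Then for all y ∈ [x₀, r], θ(y) = ψ(y) - (K/(K+1))·ψ'(y)²/ψ''(y), equivalently θ(y) = ψ(y) + (φ(y) - y)·ψ'(y)/(K+1). -/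
open Set

/-!
The two equations make `(K + 1) (θ - ψ) - (φ - y) ψ'` a first integral: its derivative is
`-(φ' ψ' - (1 + K) θ') - (K ψ' - (y - φ) ψ'')`, which vanishes. It is zero at `x₀`, hence on all
of `[x₀, r]`; dividing by `K + 1` gives the second formula, and substituting
`φ - y = -K ψ' / ψ''` from the second equation gives the first.
-/

theorem Convex.eq_of_hasDerivAt_zero {D : Set ℝ} (hD : Convex ℝ D) {f : ℝ → ℝ}
    (hf : ContinuousOn f D) (hf' : ∀ x ∈ interior D, HasDerivAt f 0 x) {x y : ℝ}
    (hx : x ∈ D) (hy : y ∈ D) : f x = f y := by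
  have hf'' : ∀ x ∈ interior D, HasDerivWithinAt f 0 (interior D) x :=
    fun x hx ↦ (hf' x hx).hasDerivWithinAt
  have hmono := monotoneOn_of_hasDerivWithinAt_nonneg hD hf hf'' fun _ _ ↦ le_rfl
  have hanti := antitoneOn_of_hasDerivWithinAt_nonpos hD hf hf'' fun _ _ ↦ le_rfl
  rcases le_total x y with hxy | hyx
  · exact le_antisymm (hmono hx hy hxy) (hanti hx hy hxy)
  · exact le_antisymm (hanti hy hx hyx) (hmono hy hx hyx)

def firstIntegral (K : ℝ) (φ ψ θ ψ' : ℝ → ℝ) (z : ℝ) : ℝ :=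
  (K + 1) * (θ z - ψ z) - (φ z - z) * ψ' z

theorem hasDerivAt_firstIntegral {K y : ℝ} {φ ψ θ ψ' : ℝ → ℝ} {dφ ddψ dθ : ℝ}
    (hφ : HasDerivAt φ dφ y) (hψ : HasDerivAt ψ (ψ' y) y) (hψ' : HasDerivAt ψ' ddψ y)
    (hθ : HasDerivAt θ dθ y) (hode1 : dφ * ψ' y = (1 + K) * dθ)
    (hode2 : K * ψ' y = (y - φ y) * ddψ) :
    HasDerivAt (firstIntegral K φ ψ θ ψ') 0 y := by
  refine (((hθ.sub hψ).const_mul (K + 1)).sub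
    ((hφ.sub (hasDerivAt_id' y)).mul hψ')).congr_deriv ?_
  rw [Pi.sub_apply]
  linear_combination -hode1 - hode2

theorem stmt_8_general (K : ℝ) (hK : 0 < K) (x₀ r : ℝ)
    (φ ψ θ φ' ψ' ψ'' θ' : ℝ → ℝ)
    (hφc : ContinuousOn φ (Set.Icc x₀ r)) (hψc : ContinuousOn ψ (Set.Icc x₀ r))
    (hθc : ContinuousOn θ (Set.Icc x₀ r)) (hψ'c : ContinuousOn ψ' (Set.Icc x₀ r))
    (hφd : ∀ y ∈ Set.Ioo x₀ r, HasDerivAt φ (φ' y) y)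
    (hψd : ∀ y ∈ Set.Ioo x₀ r, HasDerivAt ψ (ψ' y) y)
    (hψ'd : ∀ y ∈ Set.Ioo x₀ r, HasDerivAt ψ' (ψ'' y) y)
    (hθd : ∀ y ∈ Set.Ioo x₀ r, HasDerivAt θ (θ' y) y)
    (hode1 : ∀ y ∈ Set.Ioo x₀ r, φ' y * ψ' y = (1 + K) * θ' y)
    (hode2 : ∀ y ∈ Set.Ioo x₀ r, K * ψ' y = (y - φ y) * ψ'' y)
    (hψ''pos : ∀ y ∈ Set.Ioo x₀ r, 0 < ψ'' y)
    (hφx₀ : φ x₀ = x₀) (hθx₀ : θ x₀ = ψ x₀) :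
    (∀ y ∈ Set.Ioo x₀ r, θ y = ψ y - (K / (K + 1)) * (ψ' y) ^ 2 / ψ'' y) ∧
      (∀ y ∈ Set.Icc x₀ r, θ y = ψ y + (φ y - y) * ψ' y / (K + 1)) := by
  have hcont : ContinuousOn (firstIntegral K φ ψ θ ψ') (Icc x₀ r) := by
    unfold firstIntegral
    fun_prop
  have hderiv : ∀ z ∈ interior (Icc x₀ r), HasDerivAt (firstIntegral K φ ψ θ ψ') 0 z := by
    rw [interior_Icc]
    exact fun z hz ↦ hasDerivAt_firstIntegral (hφd z hz) (hψd z hz) (hψ'd z hz) (hθd z hz)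
      (hode1 z hz) (hode2 z hz)
  have hIcc : ∀ y ∈ Icc x₀ r, θ y = ψ y + (φ y - y) * ψ' y / (K + 1) := by
    intro y hy
    have hconst := (convex_Icc x₀ r).eq_of_hasDerivAt_zero hcont hderiv hy
      ⟨le_rfl, hy.1.trans hy.2⟩
    simp only [firstIntegral, hθx₀, hφx₀, sub_self, mul_zero, zero_mul] at hconst
    rw [← sub_eq_iff_eq_add', eq_div_iff (add_pos hK one_pos).ne']
    linear_combination hconst
  refine ⟨fun y hy ↦ ?_, hIcc⟩
  have hφy : φ y - y = -(K * ψ' y) / ψ'' y := by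
    rw [eq_div_iff (hψ''pos y hy).ne', hode2 y hy]
    ring
  rw [hIcc y (Ioo_subset_Icc_self hy), hφy]
  ring

/-- if `φ' ψ' = (1+K) θ'` and `K ψ' = (y - φ) ψ''` on `(x₀,r)` with
`φ(x₀) = x₀`, `θ(x₀) = ψ(x₀)` and `ψ'' > 0`, then
`θ = ψ - (K/(K+1)) ψ'²/ψ''` on `(x₀,r)` and equivalently
`θ = ψ + (φ - y) ψ'/(K+1)` on `[x₀,r]`. -/
theorem stmt_8 (n : ℕ) (hn : 2 ≤ n) (K : ℝ) (hK : 0 < K) (x₀ r : ℝ) (hx₀ : 0 < x₀)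
    (hr : x₀ < r)
    (φ ψ θ φ' ψ' ψ'' θ' : ℝ → ℝ)
    (hφc : ContinuousOn φ (Set.Icc x₀ r)) (hψc : ContinuousOn ψ (Set.Icc x₀ r))
    (hθc : ContinuousOn θ (Set.Icc x₀ r)) (hψ'c : ContinuousOn ψ' (Set.Icc x₀ r))
    (hφd : ∀ y ∈ Set.Ioo x₀ r, HasDerivAt φ (φ' y) y)
    (hψd : ∀ y ∈ Set.Ioo x₀ r, HasDerivAt ψ (ψ' y) y)
    (hψ'd : ∀ y ∈ Set.Ioo x₀ r, HasDerivAt ψ' (ψ'' y) y)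
    (hθd : ∀ y ∈ Set.Ioo x₀ r, HasDerivAt θ (θ' y) y)
    (hode1 : ∀ y ∈ Set.Ioo x₀ r, φ' y * ψ' y = (1 + K) * θ' y)
    (hode2 : ∀ y ∈ Set.Ioo x₀ r, K * ψ' y = (y - φ y) * ψ'' y)
    (hψ''pos : ∀ y ∈ Set.Ioo x₀ r, 0 < ψ'' y)
    (hφx₀ : φ x₀ = x₀) (hθx₀ : θ x₀ = ψ x₀) :
    (∀ y ∈ Set.Ioo x₀ r, θ y = ψ y - (K / (K + 1)) * (ψ' y) ^ 2 / ψ'' y) ∧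
      (∀ y ∈ Set.Icc x₀ r, θ y = ψ y + (φ y - y) * ψ' y / (K + 1)) :=
  stmt_8_general K hK x₀ r φ ψ θ φ' ψ' ψ'' θ' hφc hψc hθc hψ'c hφd hψd hψ'd hθd hode1 hode2 hψ''pos
    hφx₀ hθx₀
end

section
/- Let K > 0, n ≥ 2 and let J solve the ODE J'(u) = (J(u) + 1 - (1-u)^{1/(n-1)}) / ((K+1)·(1 - u - J(u)^{n-1})) with J(0) = 0 for u ≥ 0, and let u* = sup{u : J(u) < (1-u)^{1/(n-1)}}. Then u* < 1, and for z* = 1 - u* the function H(z) = K/((K+1)·(z - J(1-z)^{n-1})) satisfies 0 < H(z) ≤ K/((K+1)·(z - z*)) for all z ∈ (z*, 1). -/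
open Set Filter Topology

/-!
Below the curve `g u = (1 - u) ^ (1/m)` (with `m = n - 1`) the ODE keeps `J` nonnegative — a
Grönwall argument handles the degenerate start `J'(0) = 0` — and then strictly increasing on
`[0, 1)`. Since `g u → 0` as `u → 1`, `J` meets `g` at a first time `u₀ < 1`. It never dips below
`g` again: at the left end `a` of such an excursion, `J - g` has positive derivative if `a < 1`
or `m = 1`; otherwise, at the right end, `J' < 0` while the `rpow` value of `g` is nondecreasing.
So `u* = u₀`, and for `u < u*` monotonicity gives `J(u)^m ≤ g(u*)^m = 1 - u*`, which is the bound
on `H`.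
-/

theorem exists_Ico_le_forall_Ioc_lt {f g : ℝ → ℝ} (hf : Continuous f) (hg : Continuous g)
    {x w : ℝ} (hxw : x ≤ w) (hx : g x ≤ f x) (hw : f w < g w) :
    ∃ a ∈ Ico x w, g a ≤ f a ∧ ∀ t ∈ Ioc a w, f t < g t := by
  obtain ⟨a, ⟨⟨hxa, haw⟩, hga⟩, hmax⟩ :=
    (isCompact_Icc.inter_right (isClosed_le hg hf)).exists_isGreatest ⟨x, ⟨le_rfl, hxw⟩, hx⟩
  refine ⟨a, ⟨hxa, haw.lt_of_ne ?_⟩, hga, fun t ht => ?_⟩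
  · rintro rfl
    exact hw.not_ge hga
  · by_contra! h
    exact ht.1.not_ge (hmax ⟨⟨hxa.trans ht.1.le, ht.2⟩, h⟩)

theorem exists_Ioc_le_forall_Ico_lt {f g : ℝ → ℝ} (hf : Continuous f) (hg : Continuous g)
    {w y : ℝ} (hwy : w ≤ y) (hw : f w < g w) (hy : g y ≤ f y) :
    ∃ b ∈ Ioc w y, g b ≤ f b ∧ ∀ t ∈ Ico w b, f t < g t := by
  obtain ⟨b, ⟨⟨hwb, hby⟩, hgb⟩, hmin⟩ :=
    (isCompact_Icc.inter_right (isClosed_le hg hf)).exists_isLeast ⟨y, ⟨hwy, le_rfl⟩, hy⟩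
  refine ⟨b, ⟨hwb.lt_of_ne ?_, hby⟩, hgb, fun t ht => ?_⟩
  · rintro rfl
    exact hw.not_ge hgb
  · by_contra! h
    exact ht.2.not_ge (hmin ⟨⟨ht.1, ht.2.le.trans hby⟩, h⟩)

theorem not_eventually_neg_nhdsGT {φ : ℝ → ℝ} {a : ℝ} (hφ : Continuous φ) (ha : 0 ≤ φ a)
    (hd : ∀ᶠ t in 𝓝[>] a, φ t < 0 → ∃ d, 0 ≤ d ∧ HasDerivAt φ d t) :
    ¬ ∀ᶠ t in 𝓝[>] a, φ t < 0 := by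
  intro hneg
  obtain ⟨x, hax : a < x, hx⟩ := mem_nhdsGT_iff_exists_Ioc_subset.1 (hd.and hneg)
  have hderiv : ∀ t ∈ Ioo a x, ∃ d, 0 ≤ d ∧ HasDerivAt φ d t :=
    fun t ht => (hx (Ioo_subset_Ioc_self ht)).1 (hx (Ioo_subset_Ioc_self ht)).2
  have hmono : MonotoneOn φ (Icc a x) := by
    refine monotoneOn_of_deriv_nonneg (convex_Icc a x) hφ.continuousOn ?_ ?_ <;>
      rw [interior_Icc] <;> intro t ht <;> obtain ⟨d, hd0, hφd⟩ := hderiv t ht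
    · exact hφd.differentiableAt.differentiableWithinAt
    · rwa [hφd.deriv]
  have hφx : φ x < 0 := (hx ⟨hax, le_rfl⟩).2
  linarith [hmono (left_mem_Icc.2 hax.le) (right_mem_Icc.2 hax.le) hax.le]

theorem not_eventually_neg_nhdsLT {φ : ℝ → ℝ} {b : ℝ} (hφ : Continuous φ) (hb : 0 ≤ φ b)
    (hd : ∀ᶠ t in 𝓝[<] b, φ t < 0 → ∃ d ≤ 0, HasDerivAt φ d t) :
    ¬ ∀ᶠ t in 𝓝[<] b, φ t < 0 := by
  intro hneg
  obtain ⟨x, hxb : x < b, hx⟩ := mem_nhdsLT_iff_exists_Ico_subset.1 (hd.and hneg)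
  have hderiv : ∀ t ∈ Ioo x b, ∃ d ≤ 0, HasDerivAt φ d t :=
    fun t ht => (hx (Ioo_subset_Ico_self ht)).1 (hx (Ioo_subset_Ico_self ht)).2
  have hanti : AntitoneOn φ (Icc x b) := by
    refine antitoneOn_of_deriv_nonpos (convex_Icc x b) hφ.continuousOn ?_ ?_ <;>
      rw [interior_Icc] <;> intro t ht <;> obtain ⟨d, hd0, hφd⟩ := hderiv t ht
    · exact hφd.differentiableAt.differentiableWithinAt
    · rwa [hφd.deriv]
  have hφx : φ x < 0 := (hx ⟨le_rfl, hxb⟩).2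
  linarith [hanti (left_mem_Icc.2 hxb.le) (right_mem_Icc.2 hxb.le) hxb.le]

theorem nonneg_of_hasDerivAt_ge_mul_of_neg {f f' : ℝ → ℝ} {a b L ε : ℝ} (hf : Continuous f)
    (hab : a ≤ b) (ha : 0 ≤ f a) (hε : 0 < ε)
    (hd : ∀ t ∈ Ioo a b, -ε < f t → f t < 0 → HasDerivAt f (f' t) t ∧ L * f t ≤ f' t) :
    0 ≤ f b := by
  by_contra! hb
  obtain ⟨a', ⟨haa', ha'b⟩, ha', hneg⟩ :=
    exists_Ico_le_forall_Ioc_lt hf continuous_const hab ha hb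
  -- `f t * exp (-L t)` is nondecreasing while `f` is slightly negative
  set φ := fun t => f t * Real.exp (-L * t)
  have hφneg : ∀ t, φ t < 0 ↔ f t < 0 := fun t =>
    ⟨fun h => neg_of_mul_neg_left h (Real.exp_pos _).le,
      fun h => mul_neg_of_neg_of_pos h (Real.exp_pos _)⟩
  refine not_eventually_neg_nhdsGT (φ := φ) (a := a') (by fun_prop)
    (mul_nonneg ha' (Real.exp_pos _).le) ?_ ?_
  · have hε' : ∀ᶠ t in 𝓝[>] a', -ε < f t :=
      nhdsWithin_le_nhds (continuousAt_const.eventually_lt hf.continuousAt (by linarith))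
    filter_upwards [Ioo_mem_nhdsGT ha'b, hε'] with t ht hεt hφt
    obtain ⟨hft, hLf⟩ := hd t ⟨haa'.trans_lt ht.1, ht.2⟩ hεt ((hφneg t).1 hφt)
    have hexp : HasDerivAt (fun s => Real.exp (-L * s)) (Real.exp (-L * t) * (-L)) t := by
      simpa using ((hasDerivAt_id t).const_mul (-L)).exp
    exact ⟨(f' t - L * f t) * Real.exp (-L * t), mul_nonneg (by linarith) (Real.exp_pos _).le,
      (hft.mul hexp).congr_deriv (by ring)⟩
  · filter_upwards [Ioc_mem_nhdsGT ha'b] with t ht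
    exact (hφneg t).2 (hneg t ht)

/-- For `u > 1` this is `Real.rpow` at the negative base `1 - u`, whose value is
`|1 - u| ^ (1/m) * cos (π/m)`. -/
noncomputable def oneSubRoot (m : ℕ) (u : ℝ) : ℝ := (1 - u) ^ (m : ℝ)⁻¹

section oneSubRoot

variable {m : ℕ} {u : ℝ}

theorem continuous_oneSubRoot : Continuous (oneSubRoot m) :=
  (continuous_const.sub continuous_id).rpow_const fun _ => Or.inr (by positivity)

@[simp] theorem oneSubRoot_zero_right : oneSubRoot m 0 = 1 := by simp [oneSubRoot]

theorem oneSubRoot_one_right (hm : m ≠ 0) : oneSubRoot m 1 = 0 := by simp [oneSubRoot, hm]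

@[simp] theorem oneSubRoot_one_left : oneSubRoot 1 u = 1 - u := by simp [oneSubRoot]

theorem oneSubRoot_pow (hm : m ≠ 0) (hu : u ≤ 1) : oneSubRoot m u ^ m = 1 - u :=
  Real.rpow_inv_natCast_pow (by linarith) hm

theorem oneSubRoot_pos (hu : u < 1) : 0 < oneSubRoot m u := Real.rpow_pos_of_pos (by linarith) _

theorem oneSubRoot_le_one (h0 : 0 ≤ u) (h1 : u ≤ 1) : oneSubRoot m u ≤ 1 :=
  Real.rpow_le_one (by linarith) (by linarith) (by positivity)

theorem oneSubRoot_lt_one (hm : m ≠ 0) (h0 : 0 < u) (h1 : u ≤ 1) : oneSubRoot m u < 1 :=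
  Real.rpow_lt_one (by linarith) (by linarith) (by positivity)

theorem pow_lt_one_sub_of_lt_oneSubRoot (hm : m ≠ 0) {x : ℝ} (hx : x < oneSubRoot m u)
    (h : (0 ≤ x ∧ u ≤ 1) ∨ m = 1) : x ^ m < 1 - u := by
  rcases h with ⟨hx0, hu⟩ | rfl
  · rw [← oneSubRoot_pow hm hu]
    exact pow_lt_pow_left₀ hx hx0 hm
  · simpa using hx

theorem hasDerivAt_oneSubRoot (h : u ≠ 1 ∨ m = 1) :
    HasDerivAt (oneSubRoot m) (-((m : ℝ)⁻¹ * (1 - u) ^ ((m : ℝ)⁻¹ - 1))) u := by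
  have h' : 1 - u ≠ 0 ∨ 1 ≤ (m : ℝ)⁻¹ := by
    rcases h with h | rfl
    · exact Or.inl (sub_ne_zero.2 (Ne.symm h))
    · simp
  exact ((Real.hasDerivAt_rpow_const h').comp u ((hasDerivAt_id u).const_sub 1)).congr_deriv
    (by ring)

theorem exists_hasDerivAt_oneSubRoot_neg (hm : m ≠ 0) (h : u < 1 ∨ m = 1) :
    ∃ d < 0, HasDerivAt (oneSubRoot m) d u := by
  refine ⟨_, ?_, hasDerivAt_oneSubRoot (h.imp_left ne_of_lt)⟩
  rcases h with hu | rfl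
  · have : 0 < (1 - u) ^ ((m : ℝ)⁻¹ - 1) := Real.rpow_pos_of_pos (by linarith) _
    have : (0 : ℝ) < (m : ℝ)⁻¹ := inv_pos.2 (Nat.cast_pos.2 (Nat.pos_of_ne_zero hm))
    nlinarith
  · simp

theorem Real.rpow_nonneg_of_neg_of_le_half {x y : ℝ} (hx : x < 0) (hy0 : 0 ≤ y) (hy : y ≤ 1 / 2) :
    0 ≤ x ^ y := by
  rw [Real.rpow_def_of_neg hx]
  refine mul_nonneg (Real.exp_pos _).le (Real.cos_nonneg_of_mem_Icc ⟨?_, ?_⟩) <;>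
    nlinarith [Real.pi_pos]

theorem oneSubRoot_nonneg_of_one_lt (hm : 2 ≤ m) (hu : 1 < u) : 0 ≤ oneSubRoot m u := by
  refine Real.rpow_nonneg_of_neg_of_le_half (by linarith) (by positivity) ?_
  rw [one_div]
  exact inv_anti₀ (by norm_num) (by exact_mod_cast hm)

theorem exists_hasDerivAt_oneSubRoot_nonneg (hm : 2 ≤ m) (hu : 1 < u) :
    ∃ d, 0 ≤ d ∧ HasDerivAt (oneSubRoot m) d u := by
  refine ⟨_, ?_, hasDerivAt_oneSubRoot (Or.inl hu.ne')⟩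
  rw [Real.rpow_sub_one (by linarith)]
  have : (1 - u) ^ (m : ℝ)⁻¹ / (1 - u) ≤ 0 :=
    div_nonpos_of_nonneg_of_nonpos (oneSubRoot_nonneg_of_one_lt hm hu) (by linarith)
  have : (0 : ℝ) ≤ (m : ℝ)⁻¹ := by positivity
  nlinarith

end oneSubRoot

structure IsSolution (m : ℕ) (K : ℝ) (J : ℝ → ℝ) : Prop where
  continuous : Continuous J
  hasDerivAt : ∀ u, 0 ≤ u → J u < oneSubRoot m u →
    HasDerivAt J ((J u + 1 - oneSubRoot m u) / ((K + 1) * (1 - u - J u ^ m))) u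

namespace IsSolution

variable {m : ℕ} {K : ℝ} {J : ℝ → ℝ}

theorem nonneg (hJ : IsSolution m K J) (hm : m ≠ 0) (hK : 0 < K + 1) (hJ0 : J 0 = 0) {b : ℝ}
    (hb : b ≤ 1) (hJb : ∀ t ∈ Ico 0 b, J t < oneSubRoot m t) {u : ℝ} (hu : u ∈ Ico 0 b) :
    0 ≤ J u := by
  obtain ⟨hu0, hub⟩ := hu
  have hu1 : u < 1 := hub.trans_le hb
  set d := (K + 1) * ((1 - u) / 2)
  have hd : 0 < d := mul_pos hK (by linarith)
  set ε := min 1 ((1 - u) / 2)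
  have hε : 0 < ε := lt_min one_pos (by linarith)
  refine nonneg_of_hasDerivAt_ge_mul_of_neg (L := d⁻¹) hJ.continuous hu0 hJ0.ge hε
    fun t ht hεt hJt => ⟨hJ.hasDerivAt t ht.1.le (hJb t ⟨ht.1.le, ht.2.trans hub⟩), ?_⟩
  have hpow : J t ^ m ≤ (1 - u) / 2 := calc
    J t ^ m ≤ |J t| ^ m := (le_abs_self _).trans (abs_pow _ _).le
    _ ≤ ε ^ m := pow_le_pow_left₀ (abs_nonneg _) (abs_le.2 ⟨hεt.le, by linarith⟩) _
    _ ≤ ε := pow_le_of_le_one hε.le (min_le_left _ _) hm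
    _ ≤ (1 - u) / 2 := min_le_right _ _
  have hden : d ≤ (K + 1) * (1 - t - J t ^ m) :=
    mul_le_mul_of_nonneg_left (by linarith [ht.2]) hK.le
  have hnum : J t ≤ J t + 1 - oneSubRoot m t := by
    linarith [oneSubRoot_le_one (m := m) ht.1.le (ht.2.trans hu1).le]
  calc d⁻¹ * J t = J t / d := inv_mul_eq_div _ _
    _ ≤ J t / ((K + 1) * (1 - t - J t ^ m)) := by
      rw [div_le_div_iff₀ hd (hd.trans_le hden)]
      exact mul_le_mul_of_nonpos_left hden hJt.le
    _ ≤ _ := div_le_div_of_nonneg_right hnum (hd.trans_le hden).le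

theorem strictMonoOn (hJ : IsSolution m K J) (hm : m ≠ 0) (hK : 0 < K + 1) (hJ0 : J 0 = 0)
    {b : ℝ} (hb : b ≤ 1) (hJb : ∀ t ∈ Ico 0 b, J t < oneSubRoot m t) :
    StrictMonoOn J (Ico 0 b) := by
  refine strictMonoOn_of_deriv_pos (convex_Ico 0 b) hJ.continuous.continuousOn fun t ht => ?_
  rw [interior_Ico] at ht
  have hJt := hJb t ⟨ht.1.le, ht.2⟩
  have ht1 : t < 1 := ht.2.trans_le hb
  have hJt0 := hJ.nonneg hm hK hJ0 hb hJb ⟨ht.1.le, ht.2⟩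
  have hnum := oneSubRoot_lt_one hm ht.1 ht1.le
  have hden := pow_lt_one_sub_of_lt_oneSubRoot hm hJt (Or.inl ⟨hJt0, ht1.le⟩)
  rw [(hJ.hasDerivAt t ht.1.le hJt).deriv]
  exact div_pos (by linarith) (mul_pos hK (by linarith))

theorem exists_first_crossing (hJ : IsSolution m K J) (hm : m ≠ 0) (hK : 0 < K + 1)
    (hJ0 : J 0 = 0) :
    ∃ b ∈ Ioo 0 1, oneSubRoot m b ≤ J b ∧ ∀ t ∈ Ico 0 b, J t < oneSubRoot m t := by
  have hexit : ∃ y ∈ Ico (0 : ℝ) 1, oneSubRoot m y ≤ J y := by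
    by_contra! hbelow
    have hmono := hJ.strictMonoOn hm hK hJ0 le_rfl hbelow
    have hhalf : 0 < J (1 / 2) :=
      hJ0 ▸ hmono ⟨le_rfl, one_pos⟩ ⟨by norm_num, by norm_num⟩ (by norm_num)
    have hnear : ∀ᶠ t in 𝓝[<] 1, oneSubRoot m t < J (1 / 2) ∧ t ∈ Ioo (1 / 2) 1 :=
      ((continuous_oneSubRoot.continuousAt.eventually_lt continuousAt_const
        (by rwa [oneSubRoot_one_right hm])).filter_mono nhdsWithin_le_nhds).and
        (Ioo_mem_nhdsLT (by norm_num))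
    obtain ⟨t, hgt, ht⟩ := hnear.exists
    have := hmono ⟨by norm_num, by norm_num⟩ ⟨by linarith [ht.1], ht.2⟩ ht.1
    linarith [hbelow t ⟨by linarith [ht.1], ht.2⟩]
  obtain ⟨y, ⟨hy0, hy1⟩, hy⟩ := hexit
  obtain ⟨b, ⟨hb0, hby⟩, hgb, hbelow⟩ :=
    exists_Ioc_le_forall_Ico_lt hJ.continuous continuous_oneSubRoot hy0 (by simp [hJ0]) hy
  exact ⟨b, ⟨hb0, hby.trans_lt hy1⟩, hgb, hbelow⟩

theorem not_eventually_lt_nhdsGT (hJ : IsSolution m K J) (hm : m ≠ 0) (hK : 0 < K + 1) {a : ℝ}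
    (ha0 : 0 ≤ a) (ha : oneSubRoot m a ≤ J a) (h : a < 1 ∨ m = 1) :
    ¬ ∀ᶠ t in 𝓝[>] a, J t < oneSubRoot m t := by
  simp_rw [← sub_neg (a := J _)]
  refine not_eventually_neg_nhdsGT (hJ.continuous.sub continuous_oneSubRoot) (sub_nonneg.2 ha) ?_
  have hJc := hJ.continuous
  have hgc := continuous_oneSubRoot (m := m)
  have hnum : ∀ᶠ t in 𝓝 a, 0 < J t + 1 - oneSubRoot m t :=
    continuousAt_const.eventually_lt (by fun_prop) (by linarith)
  have hcase : ∀ᶠ t in 𝓝 a, (0 ≤ J t ∧ t < 1) ∨ m = 1 := by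
    rcases h with ha1 | rfl
    · filter_upwards [continuousAt_const.eventually_lt hJc.continuousAt
        ((oneSubRoot_pos ha1).trans_le ha), eventually_lt_nhds ha1] with t hJt ht
      exact Or.inl ⟨hJt.le, ht⟩
    · exact Eventually.of_forall fun _ => Or.inr rfl
  filter_upwards [self_mem_nhdsWithin, nhdsWithin_le_nhds hnum, nhdsWithin_le_nhds hcase]
    with t (ht : a < t) hnum hcase hφ
  have hJt : J t < oneSubRoot m t := sub_neg.1 hφ
  obtain ⟨dg, hdg, hg⟩ := exists_hasDerivAt_oneSubRoot_neg hm (hcase.imp_left And.right)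
  have hden := pow_lt_one_sub_of_lt_oneSubRoot hm hJt (hcase.imp_left fun h => ⟨h.1, h.2.le⟩)
  refine ⟨_, ?_, (hJ.hasDerivAt t (ha0.trans ht.le) hJt).sub hg⟩
  have := div_pos hnum (mul_pos hK (sub_pos.2 hden))
  linarith

theorem not_eventually_lt_nhdsLT (hJ : IsSolution m K J) (hm : 2 ≤ m) (hK : 0 < K + 1) {b : ℝ}
    (hb : 1 < b) (hgb : oneSubRoot m b ≤ J b) :
    ¬ ∀ᶠ t in 𝓝[<] b, J t < oneSubRoot m t := by
  simp_rw [← sub_neg (a := J _)]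
  refine not_eventually_neg_nhdsLT (hJ.continuous.sub continuous_oneSubRoot) (sub_nonneg.2 hgb) ?_
  have hJb : 0 ≤ J b := (oneSubRoot_nonneg_of_one_lt hm hb).trans hgb
  have hJc := hJ.continuous
  have hgc := continuous_oneSubRoot (m := m)
  have hnum : ∀ᶠ t in 𝓝 b, 0 < J t + 1 - oneSubRoot m t :=
    continuousAt_const.eventually_lt (by fun_prop) (by linarith)
  have hden : ∀ᶠ t in 𝓝 b, 1 - t - J t ^ m < 0 :=
    (by fun_prop : ContinuousAt (fun t => 1 - t - J t ^ m) b).eventually_lt continuousAt_const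
      (by linarith [pow_nonneg hJb m])
  filter_upwards [nhdsWithin_le_nhds hnum, nhdsWithin_le_nhds hden,
    nhdsWithin_le_nhds (eventually_gt_nhds hb)] with t hnum hden ht hφ
  obtain ⟨dg, hdg, hg⟩ := exists_hasDerivAt_oneSubRoot_nonneg hm ht
  refine ⟨_, ?_, (hJ.hasDerivAt t (by linarith) (sub_neg.1 hφ)).sub hg⟩
  have := div_neg_of_pos_of_neg hnum (mul_neg_of_pos_of_neg hK hden)
  linarith

theorem le_of_lt_oneSubRoot (hJ : IsSolution m K J) (hm : m ≠ 0) (hK : 0 < K + 1) {b₀ : ℝ}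
    (hb₀ : 0 ≤ b₀) (hgb₀ : oneSubRoot m b₀ ≤ J b₀)
    (hbdd : BddAbove {u | 0 ≤ u ∧ J u < oneSubRoot m u}) {w : ℝ}
    (hw : J w < oneSubRoot m w) : w ≤ b₀ := by
  by_contra! hb₀w
  obtain ⟨a, ⟨hb₀a, haw⟩, hga, hbelow⟩ :=
    exists_Ico_le_forall_Ioc_lt hJ.continuous continuous_oneSubRoot hb₀w.le hgb₀ hw
  by_cases h : a < 1 ∨ m = 1
  · exact hJ.not_eventually_lt_nhdsGT hm hK (hb₀.trans hb₀a) hga h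
      (eventually_of_mem (Ioc_mem_nhdsGT haw) hbelow)
  simp only [not_or, not_lt] at h
  obtain ⟨M, hM⟩ := hbdd
  have hy : oneSubRoot m (max M w + 1) ≤ J (max M w + 1) := by
    by_contra! hy
    linarith [hM ⟨by linarith [le_max_right M w], hy⟩, le_max_left M w]
  obtain ⟨b, ⟨hwb, -⟩, hgb, hbelow'⟩ := exists_Ioc_le_forall_Ico_lt hJ.continuous
    continuous_oneSubRoot (by linarith [le_max_right M w]) hw hy
  exact hJ.not_eventually_lt_nhdsLT (by omega) hK (by linarith) hgb
    (eventually_of_mem (Ico_mem_nhdsLT hwb) hbelow')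

theorem pow_le_one_sub (hJ : IsSolution m K J) (hm : m ≠ 0) (hK : 0 < K + 1) (hJ0 : J 0 = 0)
    {b₀ : ℝ} (hb₀ : b₀ ≤ 1) (hJb : ∀ t ∈ Ico 0 b₀, J t < oneSubRoot m t) {u : ℝ}
    (hu : u ∈ Ico 0 b₀) : J u ^ m ≤ 1 - b₀ := by
  have hmono := hJ.strictMonoOn hm hK hJ0 hb₀ hJb
  have hJu : J u ≤ oneSubRoot m b₀ := by
    refine ge_of_tendsto (continuous_oneSubRoot.continuousAt.tendsto.mono_left
      (nhdsWithin_le_nhds (s := Iio b₀))) ?_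
    filter_upwards [Ioo_mem_nhdsLT hu.2] with t ht
    have htb : t ∈ Ico 0 b₀ := ⟨hu.1.trans ht.1.le, ht.2⟩
    exact (hmono hu htb ht.1).le.trans (hJb t htb).le
  rw [← oneSubRoot_pow hm hb₀]
  exact pow_le_pow_left₀ (hJ.nonneg hm hK hJ0 hb₀ hJb hu) hJu m

end IsSolution

/-- for the solution `J` of
`J'(u) = (J(u) + 1 - (1-u)^{1/(n-1)}) / ((K+1)(1 - u - J(u)^{n-1}))`, `J(0) = 0`, with
`u* = sup{u : J(u) < (1-u)^{1/(n-1)}}`, we have `u* < 1` and, with `z* = 1 - u*`,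
`H(z) = K/((K+1)(z - J(1-z)^{n-1}))` satisfies `0 < H(z) ≤ K/((K+1)(z - z*))` on `(z*,1)`. -/
theorem stmt_9 (n : ℕ) (hn : 2 ≤ n) (K : ℝ) (hK : 0 < K)
    (J : ℝ → ℝ) (hJc : Continuous J) (hJ0 : J 0 = 0)
    (hJode : ∀ u : ℝ, 0 ≤ u → J u < (1 - u) ^ (((n:ℝ) - 1)⁻¹) →
      HasDerivAt J
        ((J u + 1 - (1 - u) ^ (((n:ℝ) - 1)⁻¹)) / ((K + 1) * (1 - u - J u ^ (n - 1)))) u)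
    (ustar : ℝ)
    (hustar : ustar = sSup {u : ℝ | 0 ≤ u ∧ J u < (1 - u) ^ (((n:ℝ) - 1)⁻¹)}) :
    ustar < 1 ∧
      ∀ z ∈ Set.Ioo (1 - ustar) 1,
        0 < K / ((K + 1) * (z - J (1 - z) ^ (n - 1))) ∧
          K / ((K + 1) * (z - J (1 - z) ^ (n - 1))) ≤ K / ((K + 1) * (z - (1 - ustar))) := by
  obtain ⟨m, rfl⟩ : ∃ m, n = m + 1 := ⟨n - 1, by omega⟩
  have hm : m ≠ 0 := by omega
  have hK1 : 0 < K + 1 := by linarith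
  simp only [Nat.cast_add, Nat.cast_one, add_sub_cancel_right, Nat.add_sub_cancel] at hJode hustar ⊢
  have hJ : IsSolution m K J := ⟨hJc, hJode⟩
  change ustar = sSup {u | 0 ≤ u ∧ J u < oneSubRoot m u} at hustar
  obtain ⟨b₀, ⟨hb₀0, hb₀1⟩, hgb₀, hbelow⟩ := hJ.exists_first_crossing hm hK1 hJ0
  by_cases hbdd : BddAbove {u | 0 ≤ u ∧ J u < oneSubRoot m u}
  swap
  · rw [hustar, Real.sSup_of_not_bddAbove hbdd]
    simp
  have hLUB : IsLUB {u | 0 ≤ u ∧ J u < oneSubRoot m u} b₀ :=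
    (isLUB_Ico hb₀0).of_subset_of_superset isLUB_Iic (fun t ht => ⟨ht.1, hbelow t ht⟩)
      fun w hw => hJ.le_of_lt_oneSubRoot hm hK1 hb₀0.le hgb₀ hbdd hw.2
  rw [hustar, hLUB.csSup_eq ⟨0, le_rfl, by simp [hJ0]⟩]
  refine ⟨hb₀1, fun z hz => ?_⟩
  have hJz := hJ.pow_le_one_sub hm hK1 hJ0 hb₀1.le hbelow (u := 1 - z)
    ⟨by linarith [hz.2], by linarith [hz.1]⟩
  have hzb₀ : 0 < z - (1 - b₀) := by linarith [hz.1]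
  exact ⟨div_pos hK (mul_pos hK1 (by linarith)),
    div_le_div_of_nonneg_left hK.le (mul_pos hK1 hzb₀)
      (mul_le_mul_of_nonneg_left (by linarith) hK1.le)⟩
end

section
/- Let K > 0 and ψ : [x₀, r] → ℝ twice differentiable with ψ' > 0, ψ'' > 0 on (x₀, r), and let φ(y) = y - K·ψ'(y)/ψ''(y) with φ'·ψ'(y)/(K+1) = θ'(y) for θ(y) = ψ(y) - (y-φ(y))ψ'(y)/(K+1). Fix y ∈ [x₀, r] and define L(x) = (1+K)·(ψ(x) - ψ(y)) + (y - x)·ψ'(y) for x ∈ [0, y], where ψ is extended to [0, x₀) by ψ(x) = θ(φ^{-1}(x)). Suppose ψ' > 0 on (0,r), ψ'' < 0 on (0, x₀), ψ'' > 0 on (x₀, y), ψ'(φ(y)) = ψ'(y)/(K+1), and L(φ(y)) = L(y) = 0. Then L(x) ≤ 0 for all x ∈ [0, y], with L(x) < 0 for x ∉ {φ(y), y}. -/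
open Set

/-! On `(0, x₀)` the function `L` is strictly concave with a critical point at `φ(y)`, where the
slope condition makes `L'(φ(y)) = (1+K) ψ'(φ(y)) - ψ'(y)` vanish; hence `L < L(φ(y)) = 0` there,
and in particular `L(x₀) < 0`. On `[x₀, y]` it is strictly convex, so it stays below
`max (L x₀) (L y) = 0` strictly inside the interval. -/

theorem strictConvexOn_of_hasDerivAt2_pos {D : Set ℝ} (hD : Convex ℝ D) {f f' f'' : ℝ → ℝ}
    (hf : ContinuousOn f D) (hf' : ∀ x ∈ interior D, HasDerivAt f (f' x) x)
    (hf'' : ∀ x ∈ interior D, HasDerivAt f' (f'' x) x) (hf''₀ : ∀ x ∈ interior D, 0 < f'' x) :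
    StrictConvexOn ℝ D f := by
  have hmono : StrictMonoOn f' (interior D) :=
    strictMonoOn_of_hasDerivWithinAt_pos hD.interior
      (fun x hx => (hf'' x hx).continuousAt.continuousWithinAt)
      (fun x hx => (hf'' x (interior_subset hx)).hasDerivWithinAt)
      (fun x hx => hf''₀ x (interior_subset hx))
  exact StrictMonoOn.strictConvexOn_of_deriv hD hf
    (hmono.congr fun x hx => ((hf' x hx).deriv).symm)

theorem strictConcaveOn_of_hasDerivAt2_neg {D : Set ℝ} (hD : Convex ℝ D) {f f' f'' : ℝ → ℝ}
    (hf : ContinuousOn f D) (hf' : ∀ x ∈ interior D, HasDerivAt f (f' x) x)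
    (hf'' : ∀ x ∈ interior D, HasDerivAt f' (f'' x) x) (hf''₀ : ∀ x ∈ interior D, f'' x < 0) :
    StrictConcaveOn ℝ D f := by
  simpa using (strictConvexOn_of_hasDerivAt2_pos hD hf.neg (fun x hx => (hf' x hx).neg)
    (fun x hx => (hf'' x hx).neg) (fun x hx => neg_pos.2 (hf''₀ x hx))).neg

theorem StrictConcaveOn.lt_of_hasDerivAt_zero {S : Set ℝ} {f : ℝ → ℝ} {p x : ℝ}
    (hf : StrictConcaveOn ℝ S f) (hp : p ∈ S) (hfp : HasDerivAt f 0 p) (hx : x ∈ S)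
    (hxp : x ≠ p) : f x < f p := by
  rcases hxp.lt_or_gt with hlt | hgt
  · have := hf.lt_slope_of_hasDerivAt hx hp hlt hfp
    rw [slope_def_field] at this
    linarith [(div_pos_iff_of_pos_right (sub_pos.2 hlt)).1 this]
  · have := hf.slope_lt_of_hasDerivAt hp hx hgt hfp
    rw [slope_def_field] at this
    linarith [(div_lt_iff₀ (sub_pos.2 hgt)).1 this]

theorem le_zero_of_strictConcaveOn_of_strictConvexOn {f : ℝ → ℝ} {a b c p : ℝ}
    (hconcave : StrictConcaveOn ℝ (Icc a b) f) (hconvex : StrictConvexOn ℝ (Icc b c) f)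
    (hp : p ∈ Ioo a b) (hcrit : HasDerivAt f 0 p) (hfp : f p = 0) (hfc : f c = 0) :
    ∀ x ∈ Icc a c, f x ≤ 0 ∧ (x ≠ p → x ≠ c → f x < 0) := by
  have hlt_concave : ∀ x ∈ Icc a b, x ≠ p → f x < 0 := fun x hx hxp =>
    hfp ▸ hconcave.lt_of_hasDerivAt_zero (Ioo_subset_Icc_self hp) hcrit hx hxp
  have hlt_convex : ∀ x ∈ Ioo b c, f x < 0 := by
    intro x hx
    have hbc : b < c := hx.1.trans hx.2
    have hfb := hlt_concave b (right_mem_Icc.2 (hp.1.trans hp.2).le) hp.2.ne'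
    refine (hconvex.lt_on_openSegment (left_mem_Icc.2 hbc.le) (right_mem_Icc.2 hbc.le) hbc.ne
      (by rwa [openSegment_eq_Ioo hbc])).trans_le ?_
    exact max_le hfb.le hfc.le
  have hlt : ∀ x ∈ Icc a c, x ≠ p → x ≠ c → f x < 0 := by
    rintro x ⟨hax, hxc⟩ hxp hxc'
    rcases le_or_gt x b with hxb | hbx
    · exact hlt_concave x ⟨hax, hxb⟩ hxp
    · exact hlt_convex x ⟨hbx, hxc.lt_of_ne hxc'⟩
  intro x hx
  refine ⟨?_, hlt x hx⟩
  rcases eq_or_ne x p with rfl | hxp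
  · exact hfp.le
  rcases eq_or_ne x c with rfl | hxc
  · exact hfc.le
  exact (hlt x hx hxp hxc).le

theorem stmt_18_general (K : ℝ) (hK : 0 < K) (x₀ r y : ℝ)
    (hy : y ∈ Set.Ioc x₀ r)
    (ψ ψ' ψ'' : ℝ → ℝ)
    (hψc : ContinuousOn ψ (Set.Icc 0 y))
    (hψd : ∀ x ∈ Set.Ioo (0:ℝ) x₀ ∪ Set.Ioo x₀ y, HasDerivAt ψ (ψ' x) x)
    (hψ'd : ∀ x ∈ Set.Ioo (0:ℝ) x₀ ∪ Set.Ioo x₀ y, HasDerivAt ψ' (ψ'' x) x)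
    (hψ''neg : ∀ x ∈ Set.Ioo (0:ℝ) x₀, ψ'' x < 0)
    (hψ''pos : ∀ x ∈ Set.Ioo x₀ y, 0 < ψ'' x)
    (φy : ℝ) (hφy : φy ∈ Set.Ioo (0:ℝ) x₀)
    (hslope : ψ' φy = ψ' y / (K + 1))
    (L : ℝ → ℝ)
    (hL : ∀ x, L x = (1 + K) * (ψ x - ψ y) + (y - x) * ψ' y)
    (hLφy : L φy = 0) (hLy : L y = 0) :
    ∀ x ∈ Set.Icc (0:ℝ) y, L x ≤ 0 ∧ (x ≠ φy → x ≠ y → L x < 0) := by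
  have hK1 : 0 < 1 + K := by linarith
  have hL' : ∀ x ∈ Ioo 0 x₀ ∪ Ioo x₀ y, HasDerivAt L ((1 + K) * ψ' x - ψ' y) x := by
    intro x hx
    rw [funext hL]
    exact ((((hψd x hx).sub_const (ψ y)).const_mul (1 + K)).add
      ((hasDerivAt_id' x).const_sub y |>.mul_const (ψ' y))).congr_deriv (by ring)
  have hL'' : ∀ x ∈ Ioo 0 x₀ ∪ Ioo x₀ y,
      HasDerivAt (fun x => (1 + K) * ψ' x - ψ' y) ((1 + K) * ψ'' x) x :=
    fun x hx => ((hψ'd x hx).const_mul (1 + K)).sub_const (ψ' y)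
  have hLc : ContinuousOn L (Icc 0 y) := by
    rw [funext hL]
    fun_prop
  have hconcave : StrictConcaveOn ℝ (Icc 0 x₀) L := by
    refine strictConcaveOn_of_hasDerivAt2_neg (convex_Icc _ _)
      (f' := fun x => (1 + K) * ψ' x - ψ' y) (f'' := fun x => (1 + K) * ψ'' x)
      (hLc.mono (Icc_subset_Icc_right hy.1.le)) ?_ ?_ ?_ <;> simp only [interior_Icc]
    · exact fun x hx => hL' x (Or.inl hx)
    · exact fun x hx => hL'' x (Or.inl hx)
    · exact fun x hx => mul_neg_of_pos_of_neg hK1 (hψ''neg x hx)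
  have hconvex : StrictConvexOn ℝ (Icc x₀ y) L := by
    refine strictConvexOn_of_hasDerivAt2_pos (convex_Icc _ _)
      (f' := fun x => (1 + K) * ψ' x - ψ' y) (f'' := fun x => (1 + K) * ψ'' x)
      (hLc.mono (Icc_subset_Icc_left (hφy.1.trans hφy.2).le)) ?_ ?_ ?_ <;> simp only [interior_Icc]
    · exact fun x hx => hL' x (Or.inr hx)
    · exact fun x hx => hL'' x (Or.inr hx)
    · exact fun x hx => mul_pos hK1 (hψ''pos x hx)
  have hcrit : HasDerivAt L 0 φy := by
    convert hL' φy (Or.inl hφy) using 1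
    rw [hslope, add_comm K 1, mul_div_cancel₀ _ hK1.ne', sub_self]
  exact le_zero_of_strictConcaveOn_of_strictConvexOn hconcave hconvex hφy hcrit hLφy hLy

/-- for fixed `y ∈ (x₀, r]`, the function
`L(x) = (1+K)(ψ(x) - ψ(y)) + (y - x) ψ'(y)` (with `ψ` extended below `x₀` so that it is
increasing, concave on `(0,x₀)` and convex on `(x₀,y)`, and `ψ'(φ(y)) = ψ'(y)/(K+1)`)
satisfies `L ≤ 0` on `[0,y]`, with strict inequality off `{φ(y), y}`, given
`L(φ(y)) = L(y) = 0`. -/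
theorem stmt_18 (K : ℝ) (hK : 0 < K) (x₀ r y : ℝ) (hx₀ : 0 < x₀) (hr : x₀ < r)
    (hy : y ∈ Set.Ioc x₀ r)
    (ψ ψ' ψ'' : ℝ → ℝ)
    (hψc : ContinuousOn ψ (Set.Icc 0 y))
    (hψd : ∀ x ∈ Set.Ioo (0:ℝ) x₀ ∪ Set.Ioo x₀ y, HasDerivAt ψ (ψ' x) x)
    (hψ'd : ∀ x ∈ Set.Ioo (0:ℝ) x₀ ∪ Set.Ioo x₀ y, HasDerivAt ψ' (ψ'' x) x)
    (hψ'pos : ∀ x ∈ Set.Ioo (0:ℝ) x₀ ∪ Set.Ioo x₀ y, 0 < ψ' x)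
    (hψ''neg : ∀ x ∈ Set.Ioo (0:ℝ) x₀, ψ'' x < 0)
    (hψ''pos : ∀ x ∈ Set.Ioo x₀ y, 0 < ψ'' x)
    (hψ'y : 0 < ψ' y)
    (φy : ℝ) (hφy : φy ∈ Set.Ioo (0:ℝ) x₀)
    (hslope : ψ' φy = ψ' y / (K + 1))
    (L : ℝ → ℝ)
    (hL : ∀ x, L x = (1 + K) * (ψ x - ψ y) + (y - x) * ψ' y)
    (hLφy : L φy = 0) (hLy : L y = 0) :
    ∀ x ∈ Set.Icc (0:ℝ) y, L x ≤ 0 ∧ (x ≠ φy → x ≠ y → L x < 0) :=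
  stmt_18_general K hK x₀ r y hy ψ ψ' ψ'' hψc hψd hψ'd hψ''neg hψ''pos φy hφy hslope L hL hLφy hLy
end
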